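/- For any replacement rule satisfying the Fixation Axiom and Assumption 1 (consistency of monoallelic states), the system of equations d°_g v_g = Σ_{h∈G} e°_{gh} v_h for all g ∈ G, together with Σ_{g∈G} v_g = n, has a unique solution {v_g}_{g∈G}, and this solution satisfies v_g ≥ 0 for every g ∈ G. -/

import Mathlib

/-!
Common formal scaffold for "A mathematical formalism for natural selection
with arbitrary spatial and genetic structure" (Allen & McAvoy).

A population is a finite nonempty set `G` of genetic sites.  A state is a
subset of `G` (the set of sites occupied by allele `A`); `∅` is the
monoallelic state `a` and `Finset.univ` is the monoallelic state `A`.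
A replacement event is a pair `(R, α)` with `R ⊆ G` and `α : R → G`.
-/

open Filter Topology Set

namespace NatSel

variable (G : Type) [Fintype G] [DecidableEq G]

/-- A state of the population: the set of sites holding allele `A`. -/
abbrev PopState := Finset G

/-- A replacement event `(R, α)`: the replaced set `R ⊆ G` together with the
parentage map `α : R → G`. -/
abbrev RepEvent := Σ R : Finset G, (↥R → G)

variable {G}

/-- `x_g ∈ {0,1}` as a real number. -/
def xg (x : PopState G) (g : G) : ℝ := if g ∈ x then 1 else 0

/-- `α̃` : agrees with `α` on `R`, is the identity off `R`. -/
def tildeMap (e : RepEvent G) (g : G) : G :=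
  if h : g ∈ e.1 then e.2 ⟨g, h⟩ else g

/-- `p` is a replacement rule: for each state it gives a probability
distribution over replacement events. -/
def IsRule (p : PopState G → RepEvent G → ℝ) : Prop :=
  (∀ x e, 0 ≤ p x e) ∧ ∀ x, ∑ e : RepEvent G, p x e = 1

/-- The Fixation Axiom. -/
def FixationAxiom (p : PopState G → RepEvent G → ℝ) : Prop :=
  ∃ g : G, ∃ m : ℕ, 0 < m ∧ ∃ ev : Fin m → RepEvent G,
    (∀ k, ∀ x : PopState G, 0 < p x (ev k)) ∧
    (∃ k, g ∈ (ev k).1) ∧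
    (∀ h : G, (List.ofFn fun k => tildeMap (ev k)).foldr (· ∘ ·) id h = g)

/-- `e_{gh}(x)`: marginal probability that the allele in site `h` is replaced
by a copy of the allele in site `g`, in state `x`. -/
def eMarg (p : PopState G → RepEvent G → ℝ) (g h : G) (x : PopState G) : ℝ :=
  ∑ e : RepEvent G, if hh : h ∈ e.1 then (if e.2 ⟨h, hh⟩ = g then p x e else 0) else 0

/-- `b_g(x)`: expected offspring number (birth rate) of site `g` in state `x`. -/
def bRate (p : PopState G → RepEvent G → ℝ) (g : G) (x : PopState G) : ℝ :=
  ∑ h, eMarg p g h x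

/-- `d_g(x)`: death probability of site `g` in state `x`. -/
def dProb (p : PopState G → RepEvent G → ℝ) (g : G) (x : PopState G) : ℝ :=
  ∑ h, eMarg p h g x

/-- `b(x)`: total expected offspring number in state `x`. -/
def bTot (p : PopState G → RepEvent G → ℝ) (x : PopState G) : ℝ :=
  ∑ g, bRate p g x

/-- Probability that a replaced site whose parent holds allele `parent`
(`true` = `A`) acquires allele `child`, with mutation probability `u` and
mutational bias `ν`. -/
def siteProb (u ν : ℝ) (parent child : Bool) : ℝ :=
  (if child = parent then 1 - u else 0) + (if child = true then u * ν else u * (1 - ν))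

/-- One-step transition probability `P_{x → y}` of the evolutionary Markov
chain with replacement rule `p`, mutation probability `u`, mutational bias `ν`. -/
def step (p : PopState G → RepEvent G → ℝ) (u ν : ℝ) (x y : PopState G) : ℝ :=
  ∑ e : RepEvent G, p x e *
    (if y \ e.1 = x \ e.1 then
       ∏ g ∈ e.1.attach, siteProb u ν (decide (e.2 g ∈ x)) (decide (g.1 ∈ y))
     else 0)

/-- `t`-step transition probabilities of a kernel `P`. -/
def iterKer (P : PopState G → PopState G → ℝ) : ℕ → PopState G → PopState G → ℝ
  | 0, x, y => if x = y then 1 else 0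
  | (t + 1), x, y => ∑ z : PopState G, iterKer P t x z * P z y

/-- The state obtained from `x` by the (mutation-free) replacement event `e`. -/
def applyEvent (e : RepEvent G) (x : PopState G) : PopState G :=
  Finset.univ.filter fun g => tildeMap e g ∈ x

/-- One-step transition probability of the mutation-free (`u = 0`) chain. -/
def step0 (p : PopState G → RepEvent G → ℝ) (x y : PopState G) : ℝ :=
  ∑ e : RepEvent G, if y = applyEvent e x then p x e else 0

/-- The mutant appearance distribution `μ_A`: probability `d_g(a)/b(a)` on the
state `{g}`, for each `g ∈ G`. -/
noncomputable def muA (p : PopState G → RepEvent G → ℝ) (x : PopState G) : ℝ :=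
  ∑ g : G, if x = {g} then dProb p g ∅ / bTot p ∅ else 0

/-- The mutant appearance distribution `μ_a`: probability `d_g(A)/b(A)` on the
state `G \ {g}`, for each `g ∈ G`. -/
noncomputable def mua (p : PopState G → RepEvent G → ℝ) (x : PopState G) : ℝ :=
  ∑ g : G, if x = Finset.univ \ {g} then dProb p g Finset.univ / bTot p Finset.univ else 0

/-- Fixation probability `ρ_A` (computed at `u = 0`). -/
noncomputable def rhoA (p : PopState G → RepEvent G → ℝ) (ν : ℝ) : ℝ :=
  ∑ x : PopState G, muA p x *
    limUnder atTop (fun t => iterKer (step p 0 ν) t x Finset.univ)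

/-- Fixation probability `ρ_a` (computed at `u = 0`). -/
noncomputable def rhoa (p : PopState G → RepEvent G → ℝ) (ν : ℝ) : ℝ :=
  ∑ x : PopState G, mua p x *
    limUnder atTop (fun t => iterKer (step p 0 ν) t x ∅)

/-- Frequency `x = (1/n) Σ_g x_g` of allele `A`. -/
noncomputable def freq (x : PopState G) : ℝ := (x.card : ℝ) / (Fintype.card G : ℝ)

/-- Expected change due to selection, `Δ_sel(x) = Σ_g x_g (b_g(x) − d_g(x))`. -/
def deltaSel (p : PopState G → RepEvent G → ℝ) (x : PopState G) : ℝ :=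
  ∑ g, xg x g * (bRate p g x - dProb p g x)

/-- The finset of states other than the monoallelic states `a = ∅`, `A = univ`. -/
def offStates (G : Type) [Fintype G] [DecidableEq G] : Finset (PopState G) :=
  Finset.univ.filter fun x : PopState G => x ≠ ∅ ∧ x ≠ Finset.univ

/-- Assumption 1: consistency of monoallelic states. -/
def ConsistentMono (p : PopState G → RepEvent G → ℝ) : Prop :=
  ∀ e : RepEvent G, p ∅ e = p Finset.univ e

/-- A replacement rule represents neutral drift: probabilities are
state-independent. -/
def NeutralDrift (p : PopState G → RepEvent G → ℝ) : Prop :=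
  ∀ x e, p x e = p ∅ e

/-- Reproductive values: `{v_g}` solves `d°_g v_g = Σ_h e°_{gh} v_h` (with the
monoallelic-state quantities) together with `Σ_g v_g = n`. -/
def IsRepVal (p : PopState G → RepEvent G → ℝ) (v : G → ℝ) : Prop :=
  (∀ g, dProb p g ∅ * v g = ∑ h, eMarg p g h ∅ * v h) ∧
    ∑ g, v g = (Fintype.card G : ℝ)

/-- RV-weighted birth rate `b̂_g(x) = Σ_h e_{gh}(x) v_h`. -/
def bHat (p : PopState G → RepEvent G → ℝ) (v : G → ℝ) (g : G) (x : PopState G) : ℝ :=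
  ∑ h, eMarg p g h x * v h

/-- RV-weighted death rate `d̂_g(x) = v_g d_g(x)`. -/
def dHat (p : PopState G → RepEvent G → ℝ) (v : G → ℝ) (g : G) (x : PopState G) : ℝ :=
  v g * dProb p g x

/-- Total RV-weighted birth rate `b̂(x)`. -/
def bHatTot (p : PopState G → RepEvent G → ℝ) (v : G → ℝ) (x : PopState G) : ℝ :=
  ∑ g, bHat p v g x

/-- RV-weighted change due to selection `Δ̂_sel(x) = Σ_g x_g (b̂_g(x) − d̂_g(x))`. -/
def deltaHatSel (p : PopState G → RepEvent G → ℝ) (v : G → ℝ) (x : PopState G) : ℝ :=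
  ∑ g, xg x g * (bHat p v g x - dHat p v g x)

/-- Fitness `w_g(x) = v_g − d̂_g(x) + b̂_g(x)`. -/
def fitness (p : PopState G → RepEvent G → ℝ) (v : G → ℝ) (g : G) (x : PopState G) : ℝ :=
  v g - dHat p v g x + bHat p v g x

/-- RV-weighted frequency `x̂ = (1/n) Σ_g v_g x_g`. -/
noncomputable def freqHat (v : G → ℝ) (x : PopState G) : ℝ :=
  (∑ g, v g * xg x g) / (Fintype.card G : ℝ)

/-- `{π u}_{0<u≤1}` is, for each mutation probability `0 < u ≤ 1`, a stationary
distribution of the evolutionary Markov chain (i.e. the mutation-selection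
stationary distribution, which is unique by ergodicity). -/
def IsMSSFamily (p : PopState G → RepEvent G → ℝ) (ν : ℝ)
    (π : ℝ → PopState G → ℝ) : Prop :=
  ∀ u, u ∈ Set.Ioc (0 : ℝ) 1 →
    (∀ x, 0 ≤ π u x) ∧ (∑ x : PopState G, π u x = 1) ∧
      ∀ y, π u y = ∑ x : PopState G, π u x * step p u ν x y

/-- `πR` is the rare-mutation conditional (RMC) distribution associated with
the MSS family `π`: for each non-monoallelic state `x`,
`πR x = lim_{u→0} π_MSS(x)/(1 − π_MSS(A) − π_MSS(a))`. -/
def IsRMC (π : ℝ → PopState G → ℝ) (πR : PopState G → ℝ) : Prop :=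
  ∀ x ∈ offStates G,
    Tendsto (fun u => π u x / (1 - π u Finset.univ - π u ∅))
      (nhdsWithin 0 (Set.Ioi 0)) (nhds (πR x))

end NatSel

open NatSel

/-!
The equations say that `v` is a fixed vector of the column-stochastic ancestral matrix
`M = e° + diag(1 - d°)`. The Fixation Axiom makes every left fixed vector `w = w M` constant,
by the maximum principle: a maximum of `w` at `h` propagates to every `g` with `M g h > 0`,
hence along the composition `α̃₁ ∘ ⋯ ∘ α̃ₘ`, which sends every site to `g`. So `M - 1` has
corank one and its kernel is a line. That line contains a nonzero nonnegative vector, because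
`M u = u` implies `M u⁺ = u⁺`: pointwise `M u⁺ ≥ u⁺`, and `M` preserves sums. Scaling it to
total `n` gives the unique solution.
-/

namespace Matrix

variable {ι : Type*} [Fintype ι]

theorem finrank_ker_mulVecLin_transpose {K : Type*} [Field K] (A : Matrix ι ι K) :
    Module.finrank K (LinearMap.ker Aᵀ.mulVecLin) =
      Module.finrank K (LinearMap.ker A.mulVecLin) := by
  have h := A.mulVecLin.finrank_range_add_finrank_ker
  have hT := Aᵀ.mulVecLin.finrank_range_add_finrank_ker
  have hrank : Aᵀ.rank = A.rank := rank_transpose A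
  unfold rank at hrank
  omega

variable [DecidableEq ι] {M : Matrix ι ι ℝ}

theorem mulVec_sup_zero_of_mem_colStochastic (hM : M ∈ colStochastic ℝ ι) {u : ι → ℝ}
    (hu : M *ᵥ u = u) : M *ᵥ (u ⊔ 0) = u ⊔ 0 := by
  have hle : ∀ i ∈ Finset.univ, (u ⊔ 0) i ≤ (M *ᵥ (u ⊔ 0)) i := by
    intro i _
    have hmono := nonneg_mulVec_of_mem_colStochastic hM (x := u ⊔ 0 - u)
      (fun j => sub_nonneg.2 le_sup_left) i
    rw [mulVec_sub, hu, Pi.sub_apply, sub_nonneg] at hmono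
    exact sup_le hmono (nonneg_mulVec_of_mem_colStochastic hM (fun _ => le_sup_right) i)
  funext i
  exact ((Finset.sum_eq_sum_iff_of_le hle).1
    (sum_mulVec_of_mem_colStochastic hM).symm i (Finset.mem_univ i)).symm

theorem apply_eq_of_vecMul_eq_self_of_forall_le (hM : M ∈ colStochastic ℝ ι) {w : ι → ℝ}
    (hw : w ᵥ* M = w) {t : ι} (ht : ∀ s, w s ≤ w t) {s : ι} (hst : 0 < M s t) :
    w s = w t := by
  by_contra hne
  have hlt : ∑ s', w s' * M s' t < ∑ s', w t * M s' t :=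
    Finset.sum_lt_sum
      (fun s' _ => mul_le_mul_of_nonneg_right (ht s') (nonneg_of_mem_colStochastic hM))
      ⟨s, Finset.mem_univ s, mul_lt_mul_of_pos_right (lt_of_le_of_ne (ht s) hne) hst⟩
  rw [← Finset.mul_sum, sum_col_of_mem_colStochastic hM, mul_one] at hlt
  exact hlt.ne (congrFun hw t)

theorem apply_eq_of_vecMul_eq_self_of_foldr_eq (hM : M ∈ colStochastic ℝ ι) {fs : List (ι → ι)}
    (hpos : ∀ f ∈ fs, ∀ t, 0 < M (f t) t) {g : ι} (hg : ∀ t, fs.foldr (· ∘ ·) id t = g)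
    {w : ι → ℝ} (hw : w ᵥ* M = w) (t : ι) : w t = w g := by
  have le_apply_g : ∀ {w : ι → ℝ}, w ᵥ* M = w → ∀ t, w t ≤ w g := by
    intro w hw
    have : Nonempty ι := ⟨g⟩
    obtain ⟨t₀, ht₀⟩ := Finite.exists_max w
    suffices ∀ l : List (ι → ι), (∀ f ∈ l, ∀ t, 0 < M (f t) t) →
        w (l.foldr (· ∘ ·) id t₀) = w t₀ by
      intro t
      rw [← hg t₀, this fs hpos]
      exact ht₀ t
    intro l hl
    induction l with
    | nil => rfl
    | cons f l ih =>
      have ih := ih fun f' hf' => hl f' (List.mem_cons_of_mem f hf')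
      rw [List.foldr_cons, Function.comp_apply, ← ih]
      exact apply_eq_of_vecMul_eq_self_of_forall_le hM hw (ih ▸ ht₀) (hl f List.mem_cons_self _)
  refine le_antisymm (le_apply_g hw t) (neg_le_neg_iff.1 (le_apply_g (w := -w) ?_ t))
  rw [neg_vecMul, hw]

theorem exists_nonneg_ne_zero_mulVec_eq_self (hM : M ∈ colStochastic ℝ ι) {u : ι → ℝ}
    (hu : M *ᵥ u = u) (hu₀ : u ≠ 0) : ∃ v : ι → ℝ, M *ᵥ v = v ∧ 0 ≤ v ∧ v ≠ 0 := by
  by_cases hpos : u ⊔ 0 = 0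
  · refine ⟨-u, by rw [mulVec_neg, hu], neg_nonneg.2 (sup_eq_right.1 hpos), neg_ne_zero.2 hu₀⟩
  · exact ⟨u ⊔ 0, mulVec_sup_zero_of_mem_colStochastic hM hu, le_sup_right, hpos⟩

theorem mem_ker_mulVecLin_sub_one {u : ι → ℝ} :
    u ∈ LinearMap.ker (M - 1).mulVecLin ↔ M *ᵥ u = u := by
  rw [LinearMap.mem_ker, mulVecLin_apply, sub_mulVec, one_mulVec, sub_eq_zero]

theorem finrank_ker_mulVecLin_sub_one [Nonempty ι] (hM : M ∈ colStochastic ℝ ι)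
    (hconst : ∀ w : ι → ℝ, w ᵥ* M = w → ∃ c : ℝ, w = c • 1) :
    Module.finrank ℝ (LinearMap.ker (M - 1).mulVecLin) = 1 := by
  have hker : LinearMap.ker (M - 1)ᵀ.mulVecLin = Submodule.span ℝ {1} := by
    ext w
    rw [transpose_sub, transpose_one, mem_ker_mulVecLin_sub_one, mulVec_transpose,
      Submodule.mem_span_singleton]
    constructor
    · intro hw
      obtain ⟨c, rfl⟩ := hconst w hw
      exact ⟨c, rfl⟩
    · rintro ⟨c, rfl⟩
      rw [smul_vecMul, one_vecMul_of_mem_colStochastic hM]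
  rw [← finrank_ker_mulVecLin_transpose, hker, finrank_span_singleton one_ne_zero]

theorem exists_unique_stationary [Nonempty ι] (hM : M ∈ colStochastic ℝ ι)
    (hconst : ∀ w : ι → ℝ, w ᵥ* M = w → ∃ c : ℝ, w = c • 1) :
    ∃ v : ι → ℝ, M *ᵥ v = v ∧ 0 ≤ v ∧ ∑ i, v i = 1 ∧
      ∀ u : ι → ℝ, M *ᵥ u = u → u = (∑ i, u i) • v := by
  have hrank := finrank_ker_mulVecLin_sub_one hM hconst
  obtain ⟨⟨u₀, hu₀⟩, hne⟩ := Module.finrank_pos_iff_exists_ne_zero.1 (hrank ▸ Nat.one_pos)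
  obtain ⟨u, hu, hu_nonneg, hu_ne⟩ := exists_nonneg_ne_zero_mulVec_eq_self hM
    (mem_ker_mulVecLin_sub_one.1 hu₀) (by simpa using hne)
  have hspan : ∀ w : ι → ℝ, M *ᵥ w = w → ∃ c : ℝ, w = c • u := by
    intro w hw
    obtain ⟨c, hc⟩ := (finrank_eq_one_iff_of_nonzero' ⟨u, mem_ker_mulVecLin_sub_one.2 hu⟩
      (by simpa using hu_ne)).1 hrank ⟨w, mem_ker_mulVecLin_sub_one.2 hw⟩
    exact ⟨c, (congrArg Subtype.val hc).symm⟩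
  have hsum : 0 < ∑ i, u i := by
    obtain ⟨i, hi⟩ := Function.ne_iff.1 hu_ne
    exact Finset.sum_pos' (fun j _ => hu_nonneg j)
      ⟨i, Finset.mem_univ i, (hu_nonneg i).lt_of_ne' hi⟩
  refine ⟨(∑ i, u i)⁻¹ • u, by rw [mulVec_smul, hu],
    smul_nonneg (inv_nonneg.2 hsum.le) hu_nonneg, ?_, fun w hw => ?_⟩
  · simp only [Pi.smul_apply, smul_eq_mul, ← Finset.mul_sum, inv_mul_cancel₀ hsum.ne']
  · obtain ⟨c, rfl⟩ := hspan w hw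
    simp only [Pi.smul_apply, smul_eq_mul, ← Finset.mul_sum, smul_smul,
      mul_assoc, mul_inv_cancel₀ hsum.ne', mul_one]

end Matrix

namespace NatSel

open Matrix

variable {G : Type} [Fintype G] [DecidableEq G] {p : PopState G → RepEvent G → ℝ}

/-- Column `h` is the law of the parent of the allele at `h` after one replacement step in a
monoallelic state: a copy of `g` with probability `e°_{gh}`, itself if `h` survives. -/
def ancestralMatrix (p : PopState G → RepEvent G → ℝ) : Matrix G G ℝ :=
  Matrix.of fun g h => eMarg p g h ∅ + if g = h then 1 - dProb p g ∅ else 0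

theorem eMarg_nonneg (hp : IsRule p) (g h : G) (x : PopState G) : 0 ≤ eMarg p g h x :=
  Finset.sum_nonneg fun e _ => by split_ifs <;> simp [hp.1 x e]

theorem le_eMarg (hp : IsRule p) (x : PopState G) (e : RepEvent G) {h : G} (hh : h ∈ e.1) :
    p x e ≤ eMarg p (e.2 ⟨h, hh⟩) h x := by
  unfold eMarg
  have := Finset.single_le_sum (fun e' _ => ?_) (Finset.mem_univ e) (f := fun e' : RepEvent G =>
    if hh' : h ∈ e'.1 then (if e'.2 ⟨h, hh'⟩ = e.2 ⟨h, hh⟩ then p x e' else 0) else 0)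
  · simpa [hh] using this
  · split_ifs <;> simp [hp.1 x e']

theorem dProb_eq_sum (g : G) (x : PopState G) :
    dProb p g x = ∑ e : RepEvent G, if g ∈ e.1 then p x e else 0 := by
  unfold dProb eMarg
  rw [Finset.sum_comm]
  refine Finset.sum_congr rfl fun e _ => ?_
  split_ifs <;> simp

theorem one_sub_dProb_eq_sum (hp : IsRule p) (g : G) (x : PopState G) :
    1 - dProb p g x = ∑ e : RepEvent G, if g ∈ e.1 then 0 else p x e := by
  rw [dProb_eq_sum, ← hp.2 x, ← Finset.sum_sub_distrib]
  exact Finset.sum_congr rfl fun e _ => by split_ifs <;> ring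

theorem one_sub_dProb_nonneg (hp : IsRule p) (g : G) (x : PopState G) : 0 ≤ 1 - dProb p g x := by
  rw [one_sub_dProb_eq_sum hp]
  exact Finset.sum_nonneg fun e _ => by split_ifs <;> simp [hp.1 x e]

theorem le_one_sub_dProb (hp : IsRule p) (x : PopState G) {e : RepEvent G} {g : G}
    (hg : g ∉ e.1) : p x e ≤ 1 - dProb p g x := by
  rw [one_sub_dProb_eq_sum hp]
  have := Finset.single_le_sum (fun e' _ => ?_) (Finset.mem_univ e)
    (f := fun e' : RepEvent G => if g ∈ e'.1 then 0 else p x e')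
  · simpa [hg] using this
  · split_ifs <;> simp [hp.1 x e']

theorem ancestralMatrix_mem_colStochastic (hp : IsRule p) :
    ancestralMatrix p ∈ Matrix.colStochastic ℝ G := by
  refine Matrix.mem_colStochastic_iff_sum.2 ⟨fun g h => ?_, fun h => ?_⟩
  · have := eMarg_nonneg hp g h ∅
    have := one_sub_dProb_nonneg hp g ∅
    simp only [ancestralMatrix, Matrix.of_apply]
    split_ifs <;> linarith
  · simp only [ancestralMatrix, Matrix.of_apply, Finset.sum_add_distrib, Finset.sum_ite_eq',
      Finset.mem_univ, if_true]
    exact add_sub_cancel (dProb p h ∅) 1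

theorem ancestralMatrix_tildeMap_pos (hp : IsRule p) {e : RepEvent G} (he : 0 < p ∅ e) (h : G) :
    0 < ancestralMatrix p (tildeMap e h) h := by
  simp only [ancestralMatrix, Matrix.of_apply]
  by_cases hh : h ∈ e.1
  · have := le_eMarg hp ∅ e hh
    have : 0 ≤ if tildeMap e h = h then 1 - dProb p (tildeMap e h) ∅ else 0 := by
      split_ifs
      exacts [one_sub_dProb_nonneg hp _ _, le_rfl]
    simp only [tildeMap, hh, dite_true] at *
    linarith
  · have := le_one_sub_dProb hp ∅ hh
    have := eMarg_nonneg hp h h ∅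
    simp only [tildeMap, hh, dite_false, if_true]
    linarith

theorem mulVec_ancestralMatrix_eq_self_iff {v : G → ℝ} :
    ancestralMatrix p *ᵥ v = v ↔ ∀ g, dProb p g ∅ * v g = ∑ h, eMarg p g h ∅ * v h := by
  have hM : ∀ g, (ancestralMatrix p *ᵥ v) g =
      ∑ h, eMarg p g h ∅ * v h + (1 - dProb p g ∅) * v g := by
    intro g
    simp only [Matrix.mulVec, dotProduct, ancestralMatrix, Matrix.of_apply, add_mul, ite_mul,
      zero_mul, Finset.sum_add_distrib, Finset.sum_ite_eq, Finset.mem_univ, if_true]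
  simp only [funext_iff, hM]
  exact forall_congr' fun g => by constructor <;> intro h <;> linarith

theorem FixationAxiom.eq_smul_one_of_vecMul_eq_self (hp : IsRule p) (hfix : FixationAxiom p)
    {w : G → ℝ} (hw : w ᵥ* ancestralMatrix p = w) : ∃ c : ℝ, w = c • 1 := by
  obtain ⟨g, m, -, ev, hpos, -, hcoal⟩ := hfix
  refine ⟨w g, funext fun t => ?_⟩
  refine (Matrix.apply_eq_of_vecMul_eq_self_of_foldr_eq (ancestralMatrix_mem_colStochastic hp)
    (fun f hf t => ?_) hcoal hw t).trans (by simp)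
  obtain ⟨k, rfl⟩ := List.mem_ofFn.1 hf
  exact ancestralMatrix_tildeMap_pos hp (hpos k ∅) t

end NatSel

theorem statement6_general
    {G : Type} [Fintype G] [DecidableEq G] [Nonempty G]
    (p : PopState G → RepEvent G → ℝ) (hrule : IsRule p) (hfix : FixationAxiom p) :
    ∃ v : G → ℝ, (IsRepVal p v ∧ ∀ g, 0 ≤ v g) ∧
      ∀ w : G → ℝ, IsRepVal p w → w = v := by
  obtain ⟨v, hv, hv_nonneg, hv_sum, hv_unique⟩ :=
    Matrix.exists_unique_stationary (ancestralMatrix_mem_colStochastic hrule)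
      fun _ hw => hfix.eq_smul_one_of_vecMul_eq_self hrule hw
  have hrepval : IsRepVal p ((Fintype.card G : ℝ) • v) :=
    ⟨mulVec_ancestralMatrix_eq_self_iff.1 (by rw [Matrix.mulVec_smul, hv]),
      by simp [← Finset.mul_sum, hv_sum]⟩
  refine ⟨_, ⟨hrepval, fun g => mul_nonneg (Nat.cast_nonneg _) (hv_nonneg g)⟩, fun w hw => ?_⟩
  rw [hv_unique w (mulVec_ancestralMatrix_eq_self_iff.2 hw.1), hw.2]

/-- Proposition 1 of Allen & McAvoy: for a replacement rule
satisfying the Fixation Axiom and Assumption 1, the reproductive-value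
equations `d°_g v_g = Σ_h e°_{gh} v_h` (for all `g ∈ G`) together with
`Σ_g v_g = n` have a unique solution, and that solution is nonnegative. -/
theorem statement6
    {G : Type} [Fintype G] [DecidableEq G] [Nonempty G]
    (p : PopState G → RepEvent G → ℝ) (hrule : IsRule p) (hfix : FixationAxiom p)
    (hcons : ConsistentMono p) :
    ∃ v : G → ℝ, (IsRepVal p v ∧ ∀ g, 0 ≤ v g) ∧
      ∀ w : G → ℝ, IsRepVal p w → w = v :=
  statement6_general p hrule hfix
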